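/- (Multi-dimensional TQFF) Fix d ≥ 1 and L ≥ 1. For each j = 1, …, d let w_j be an integrable even weight on [−π, π], and let ω_{1,j}, …, ω_{L,j} ∈ [0, π) with nonnegative weights a_{1,j}, …, a_{L,j} be a quadrature rule with trigonometric exactness of degree 2L−1 with respect to w_j. Extend symmetrically by setting ω_{−i,j} = −ω_{i,j} and a_{−i,j} = a_{i,j} for i = 1, …, L. Let S be any subset of the index grid ∏_{j=1}^{d} {−L, …, −1, 1, …, L} containing exactly one element of each antipodal pair {i, −i}. For a multi-index i ∈ S set a_i = ∏_{j=1}^{d} (1/2) a_{i_j, j} and ω_i = (ω_{i_1,1}, …, ω_{i_d,d}). Then for every k ∈ ℕ^d with ‖k‖_∞ ≤ 2L−1: Σ_{i ∈ S} 2 a_i cos(ω_iᵀ k) = ∫_{[−π,π]^d} (∏_{j=1}^{d} w_j(ω^{(j)})) cos(ωᵀ k) dω. -/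

import Mathlib

/-!
Over the full symmetric grid the summand is invariant under the antipodal map, so twice the
sum over `S` is the sum over the whole grid. Writing `cos (ωᵀ k) = Re ∏ⱼ exp (i ωⱼ kⱼ)`, that
sum factors into one-dimensional symmetric sums `Σᵢ aᵢⱼ cos (kⱼ ωᵢⱼ)`, which exactness turns
into `∫ wⱼ(x) cos (kⱼ x) dx`. The integral over the box factors the same way by Fubini; there
each imaginary part `∫ wⱼ(x) sin (kⱼ x) dx` vanishes because `wⱼ` is even.
-/

open scoped Real
open MeasureTheory

section

open Complex

theorem prod_mul_cos_sum_eq_re_prod {ι : Type*} (s : Finset ι) (g θ : ι → ℝ) :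
    (∏ j ∈ s, g j) * Real.cos (∑ j ∈ s, θ j) = (∏ j ∈ s, (g j : ℂ) * exp (θ j * I)).re := by
  rw [Finset.prod_mul_distrib, ← exp_sum, ← Finset.sum_mul, ← ofReal_sum, ← ofReal_prod,
    re_ofReal_mul, exp_ofReal_mul_I_re]

theorem setIntegral_univ_pi_prod_eq_prod {ι 𝕜 : Type*} [Fintype ι] [RCLike 𝕜] {E : ι → Type*}
    [∀ i, MeasureSpace (E i)] [∀ i, SigmaFinite (volume : Measure (E i))]
    (s : (i : ι) → Set (E i)) (f : (i : ι) → E i → 𝕜) :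
    ∫ x in Set.univ.pi s, ∏ i, f i (x i) = ∏ i, ∫ x in s i, f i x := by
  rw [volume_pi, Measure.restrict_pi_pi, integral_fintype_prod_eq_prod]

theorem MeasureTheory.IntegrableOn.univ_pi_prod {ι 𝕜 : Type*} [Fintype ι] [RCLike 𝕜] {E : ι → Type*}
    [∀ i, MeasureSpace (E i)] [∀ i, SigmaFinite (volume : Measure (E i))]
    {s : (i : ι) → Set (E i)} {f : (i : ι) → E i → 𝕜} (hf : ∀ i, IntegrableOn (f i) (s i)) :
    IntegrableOn (fun x => ∏ i, f i (x i)) (Set.univ.pi s) := by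
  rw [IntegrableOn, volume_pi, Measure.restrict_pi_pi]
  exact .fintype_prod_dep hf

theorem IntervalIntegrable.ofReal {f : ℝ → ℝ} {μ : Measure ℝ} {a b : ℝ}
    (hf : IntervalIntegrable f μ a b) : IntervalIntegrable (fun x => (f x : ℂ)) μ a b :=
  ⟨hf.1.ofReal, hf.2.ofReal⟩

theorem intervalIntegral_mul_sin_eq_zero_of_even {w : ℝ → ℝ} (hw : ∀ x, w (-x) = w x)
    (r t : ℝ) : ∫ x in -r..r, w x * Real.sin (t * x) = 0 := by
  have h := intervalIntegral.integral_comp_neg (a := -r) (b := r) fun x => w x * Real.sin (t * x)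
  simp only [neg_neg, mul_neg, Real.sin_neg, hw, intervalIntegral.integral_neg] at h
  linarith

theorem intervalIntegral_mul_exp_eq_mul_cos_of_even {w : ℝ → ℝ} {r : ℝ}
    (hw_int : IntervalIntegrable w volume (-r) r) (hw : ∀ x, w (-x) = w x) (t : ℝ) :
    ∫ x in -r..r, (w x : ℂ) * exp (↑(t * x) * I) = ↑(∫ x in -r..r, w x * Real.cos (t * x)) := by
  have hcos : IntervalIntegrable (fun x => w x * Real.cos (t * x)) volume (-r) r :=
    hw_int.mul_continuousOn (by fun_prop)
  have hsin : IntervalIntegrable (fun x => w x * Real.sin (t * x)) volume (-r) r :=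
    hw_int.mul_continuousOn (by fun_prop)
  have hsplit : ∀ x : ℝ, (w x : ℂ) * exp (↑(t * x) * I)
      = ↑(w x * Real.cos (t * x)) + ↑(w x * Real.sin (t * x)) * I := by
    intro x
    rw [← cos_add_sin_I, ← ofReal_cos, ← ofReal_sin]
    push_cast
    ring
  simp_rw [hsplit]
  rw [intervalIntegral.integral_add hcos.ofReal (hsin.ofReal.mul_const I),
    intervalIntegral.integral_mul_const, intervalIntegral.integral_ofReal,
    intervalIntegral.integral_ofReal, intervalIntegral_mul_sin_eq_zero_of_even hw]
  simp

theorem setIntegral_univ_pi_Icc_prod_mul_cos_sum_eq_prod {ι : Type*} [Fintype ι]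
    {w : ι → ℝ → ℝ} {r : ℝ} (hr : 0 ≤ r) (hw_int : ∀ j, IntegrableOn (w j) (Set.Icc (-r) r))
    (hw : ∀ j x, w j (-x) = w j x) (t : ι → ℝ) :
    ∫ x in Set.univ.pi fun _ => Set.Icc (-r) r, (∏ j, w j (x j)) * Real.cos (∑ j, x j * t j)
      = ∏ j, ∫ x in -r..r, w j x * Real.cos (t j * x) := by
  set F : ι → ℝ → ℂ := fun j x => (w j x : ℂ) * exp (↑(t j * x) * I)
  have hF : ∀ j, IntegrableOn (F j) (Set.Icc (-r) r) := fun j =>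
    IntegrableOn.mul_continuousOn (hw_int j).ofReal (by fun_prop) isCompact_Icc
  calc _ = ∫ x in Set.univ.pi fun _ => Set.Icc (-r) r, (∏ j, F j (x j)).re := by
        simp_rw [F, ← prod_mul_cos_sum_eq_re_prod, mul_comm (t _)]
    _ = (∫ x in Set.univ.pi fun _ => Set.Icc (-r) r, ∏ j, F j (x j)).re :=
        integral_re (IntegrableOn.univ_pi_prod hF)
    _ = (∏ j, ∫ x in Set.Icc (-r) r, F j x).re := by rw [setIntegral_univ_pi_prod_eq_prod]
    _ = _ := by
        have hrr : -r ≤ r := by linarith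
        simp_rw [integral_Icc_eq_integral_Ioc, ← intervalIntegral.integral_of_le hrr, F,
          intervalIntegral_mul_exp_eq_mul_cos_of_even
            ((Set.uIcc_of_le hrr ▸ hw_int _).intervalIntegrable) (hw _),
          ← ofReal_prod, ofReal_re]

/-- `(i, true)` and `(i, false)` encode the signed indices `i` and `-i`, with `ω₋ᵢ = -ωᵢ`. -/
def signedNode {ι : Type*} (ω : ι → ℝ) (p : ι × Bool) : ℝ :=
  if p.2 then ω p.1 else -ω p.1

theorem sum_half_mul_exp_signedNode {ι : Type*} [Fintype ι] (a ω : ι → ℝ) (t : ℝ) :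
    ∑ p : ι × Bool, ((1 / 2 * a p.1 : ℝ) : ℂ) * exp (↑(signedNode ω p * t) * I)
      = ↑(∑ i, a i * Real.cos (t * ω i)) := by
  simp only [Fintype.sum_prod_type, Fintype.sum_bool, signedNode, ofReal_sum]
  refine Finset.sum_congr rfl fun i _ => ?_
  have h := two_cos (ω i * t)
  push_cast at h ⊢
  rw [mul_comm (t : ℂ), neg_mul]
  linear_combination (-a i / 2 : ℂ) * h

theorem signedNode_not {ι : Type*} (ω : ι → ℝ) (i : ι) (b : Bool) :
    signedNode ω (i, !b) = -signedNode ω (i, b) := by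
  cases b <;> simp [signedNode]

theorem sum_pi_prod_mul_cos_sum_signedNode {ι κ : Type*} [Fintype ι] [Fintype κ] [DecidableEq κ]
    (a ω : ι → κ → ℝ) (t : κ → ℝ) :
    ∑ v : κ → ι × Bool, (∏ j, 1 / 2 * a (v j).1 j) *
        Real.cos (∑ j, signedNode (ω · j) (v j) * t j)
      = ∏ j, ∑ i, a i j * Real.cos (t j * ω i j) := by
  have hfactor := Fintype.prod_sum fun j (p : ι × Bool) =>
    ((1 / 2 * a p.1 j : ℝ) : ℂ) * exp (↑(signedNode (ω · j) p * t j) * I)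
  simp only [fun j => sum_half_mul_exp_signedNode (a · j) (ω · j) (t j), ← ofReal_prod]
    at hfactor
  simp_rw [prod_mul_cos_sum_eq_re_prod]
  rw [← Complex.re_sum, ← hfactor, ofReal_re]

theorem two_nsmul_sum_eq_sum_univ_of_involutive {α M : Type*} [Fintype α] [AddCommMonoid M]
    {N : α → α} (hN : Function.Involutive N) {f : α → M} (hf : ∀ v, f (N v) = f v)
    {S : Finset α} (hS : ∀ v, v ∈ S ↔ N v ∉ S) :
    2 • ∑ v ∈ S, f v = ∑ v, f v := by
  classical
  have hcompl : Sᶜ = S.map ⟨N, hN.injective⟩ := by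
    ext v
    rw [Finset.mem_compl, Finset.mem_map]
    constructor
    · intro hv
      exact ⟨N v, by rwa [hS, hN], hN v⟩
    · rintro ⟨u, hu, rfl⟩
      exact (hS u).1 hu
  rw [← Finset.sum_add_sum_compl S, hcompl, Finset.sum_map, two_nsmul]
  simp only [Function.Embedding.coeFn_mk, hf]

end

theorem multidim_trig_quadrature_exactness_general
    (d L : ℕ)
    (w : Fin d → ℝ → ℝ)
    (hwint : ∀ j, IntegrableOn (w j) (Set.Icc (-π) π))
    (hweven : ∀ j, ∀ x : ℝ, w j (-x) = w j x)
    (ω : Fin L → Fin d → ℝ)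
    (a : Fin L → Fin d → ℝ)
    (hexact : ∀ j : Fin d, ∀ k : ℕ, k ≤ 2 * L - 1 →
      (∑ i : Fin L, a i j * Real.cos (k * ω i j))
        = ∫ x in (-π)..π, w j x * Real.cos (k * x))
    (S : Finset (Fin d → Fin L × Bool))
    (hS : ∀ v : Fin d → Fin L × Bool,
      v ∈ S ↔ (fun j => ((v j).1, !(v j).2)) ∉ S)
    (k : Fin d → ℕ) (hk : ∀ j, k j ≤ 2 * L - 1) :
    (∑ v ∈ S, 2 * (∏ j : Fin d, (1 / 2) * a (v j).1 j) *
        Real.cos (∑ j : Fin d,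
          (if (v j).2 then ω (v j).1 j else -(ω (v j).1 j)) * k j))
      = ∫ x : Fin d → ℝ in Set.univ.pi (fun _ : Fin d => Set.Icc (-π) π),
          (∏ j : Fin d, w j (x j)) * Real.cos (∑ j : Fin d, x j * k j) := by
  set f : (Fin d → Fin L × Bool) → ℝ := fun v =>
    (∏ j, 1 / 2 * a (v j).1 j) * Real.cos (∑ j, signedNode (ω · j) (v j) * k j)
  have hinv : Function.Involutive fun v : Fin d → Fin L × Bool => fun j => ((v j).1, !(v j).2) :=
    fun v => by simp
  have hf : ∀ v, f (fun j => ((v j).1, !(v j).2)) = f v := fun v => by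
    simp only [f, signedNode_not, neg_mul, Finset.sum_neg_distrib, Real.cos_neg]
  calc _ = 2 • ∑ v ∈ S, f v := by
        rw [Finset.smul_sum]
        simp only [f, nsmul_eq_mul, Nat.cast_ofNat, mul_assoc]
        rfl
    _ = ∑ v, f v := two_nsmul_sum_eq_sum_univ_of_involutive hinv hf hS
    _ = ∏ j, ∑ i, a i j * Real.cos (k j * ω i j) := sum_pi_prod_mul_cos_sum_signedNode a ω _
    _ = ∏ j, ∫ x in -π..π, w j x * Real.cos (k j * x) :=
        Finset.prod_congr rfl fun j _ => hexact j (k j) (hk j)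
    _ = _ := (setIntegral_univ_pi_Icc_prod_mul_cos_sum_eq_prod Real.pi_pos.le hwint hweven _).symm

/-- Multi-dimensional TQFF: given, in each dimension `j`, a
one-dimensional quadrature rule with nodes in `[0, π)`, nonnegative weights and
trigonometric exactness of degree `2L − 1` with respect to an integrable even weight
`w_j`, extend symmetrically (a signed index is encoded as a pair `(i, s) : Fin L × Bool`
with node `ω_{i,j}` if `s` and `−ω_{i,j}` otherwise, and weight `a_{i,j}` either way).
For any set `S` of multi-indices containing exactly one member of each antipodal pair,
the tensor-product rule `Σ_{i ∈ S} 2 a_i cos(ω_iᵀ k)` with `a_i = ∏_j (1/2) a_{i_j, j}`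
integrates `cos(ωᵀ k)` exactly against `∏_j w_j` over `[−π, π]^d` whenever
`‖k‖_∞ ≤ 2L − 1`. -/
theorem multidim_trig_quadrature_exactness
    (d L : ℕ) (hd : 1 ≤ d) (hL : 1 ≤ L)
    (w : Fin d → ℝ → ℝ)
    (hwint : ∀ j, IntegrableOn (w j) (Set.Icc (-π) π))
    (hweven : ∀ j, ∀ x : ℝ, w j (-x) = w j x)
    (ω : Fin L → Fin d → ℝ)
    (hmem : ∀ i j, ω i j ∈ Set.Ico 0 π)
    (a : Fin L → Fin d → ℝ)
    (ha : ∀ i j, 0 ≤ a i j)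
    (hexact : ∀ j : Fin d, ∀ k : ℕ, k ≤ 2 * L - 1 →
      (∑ i : Fin L, a i j * Real.cos (k * ω i j))
        = ∫ x in (-π)..π, w j x * Real.cos (k * x))
    (S : Finset (Fin d → Fin L × Bool))
    (hS : ∀ v : Fin d → Fin L × Bool,
      v ∈ S ↔ (fun j => ((v j).1, !(v j).2)) ∉ S)
    (k : Fin d → ℕ) (hk : ∀ j, k j ≤ 2 * L - 1) :
    (∑ v ∈ S, 2 * (∏ j : Fin d, (1 / 2) * a (v j).1 j) *
        Real.cos (∑ j : Fin d,
          (if (v j).2 then ω (v j).1 j else -(ω (v j).1 j)) * k j))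
      = ∫ x : Fin d → ℝ in Set.univ.pi (fun _ : Fin d => Set.Icc (-π) π),
          (∏ j : Fin d, w j (x j)) * Real.cos (∑ j : Fin d, x j * k j) :=
  multidim_trig_quadrature_exactness_general d L w hwint hweven ω a hexact S hS k hk
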